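/- arXiv:math/0609182 — 4 statements merged into one kernel-verified Lean document; each statement's English description precedes it below -/
import Mathlib

section
/- Every infinite-dimensional C*-algebra contains a positive element whose spectrum is infinite. -/
/-!
If every positive element of `A` has finite quasispectrum, then every self-adjoint element of the
unitization `B` has finite spectrum. Eigenprojections of a self-adjoint `q h q` then show that a
projection `q` with `q B q ≠ ℂ q` has a nonzero proper subprojection, while a strictly decreasing
chain of projections `f n` would give orthogonal projections `f n - f (n + 1)` and the element
`∑ 2⁻ⁿ (f n - f (n + 1))`, with infinite spectrum. So projections are well founded, `1` is a finite
sum of minimal projections `pᵢ`, each corner `pᵢ B pⱼ` has dimension at most one, and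
`B = ∑ pᵢ B pⱼ` is finite-dimensional.
-/

theorem mem_spectrum_of_mul_eq_smul {R A : Type*} [CommRing R] [Ring A] [Algebra R A]
    {a p : A} {c : R} (hp : p ≠ 0) (h : a * p = c • p) : c ∈ spectrum R a := by
  intro hu
  apply hp
  have : (algebraMap R A c - a) * p = 0 := by
    rw [sub_mul, h, Algebra.algebraMap_eq_smul_one, smul_one_mul, sub_self]
  simpa using hu.mul_right_eq_zero.mp this

theorem spectrum_finite_of_spectrum_mul_self_finite {A : Type*} [Ring A] [Algebra ℂ A] (a : A)
    (h : (spectrum ℂ (a * a)).Finite) : (spectrum ℂ a).Finite := by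
  have hsub : spectrum ℂ a ⊆ (fun z => z ^ 2) ⁻¹' spectrum ℂ (a * a) := fun z hz => by
    have := spectrum.subset_polynomial_aeval a (Polynomial.X ^ 2) (Set.mem_image_of_mem _ hz)
    simpa [sq] using this
  refine (h.preimage' fun w _ => ?_).subset hsub
  exact (Polynomial.nthRoots 2 w).toFinset.finite_toSet.subset fun z hz => by
    simpa [Polynomial.mem_nthRoots] using hz

open ComplexStarModule in
theorem exists_mul_mul_eq_smul_of_forall_isSelfAdjoint {A : Type*} [Ring A] [StarRing A]
    [Algebra ℂ A] [StarModule ℂ A] {q : A}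
    (H : ∀ h, IsSelfAdjoint h → ∃ c : ℂ, q * h * q = c • q) (x : A) :
    ∃ c : ℂ, q * x * q = c • q := by
  obtain ⟨c, hc⟩ := H _ (ℜ x).2
  obtain ⟨d, hd⟩ := H _ (ℑ x).2
  refine ⟨c + Complex.I * d, ?_⟩
  rw [← realPart_add_I_smul_imaginaryPart x, mul_add, add_mul, mul_smul_comm, smul_mul_assoc,
    hc, hd, smul_smul, add_smul]

section CStarAlgebra
variable {B : Type*} [CStarAlgebra B]

theorem exists_isSelfAdjoint_spectrum_infinite {p : ℕ → B} (hp : ∀ n, IsStarProjection (p n))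
    (hp0 : ∀ n, p n ≠ 0) (horth : Pairwise fun m n => p m * p n = 0) :
    ∃ a : B, IsSelfAdjoint a ∧ (spectrum ℂ a).Infinite := by
  set c : ℕ → ℝ := fun n => (1 / 2) ^ n
  have hsum : Summable fun n => c n • p n :=
    .of_norm_bounded summable_geometric_two fun n => by
      simpa [c, norm_smul] using
        mul_le_of_le_one_right (by positivity : (0 : ℝ) ≤ (1 / 2) ^ n) (hp n).norm_le
  refine ⟨∑' n, c n • p n, ?_, ?_⟩
  · simp only [IsSelfAdjoint, tsum_star, star_smul, star_trivial, (hp _).isSelfAdjoint.star_eq]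
  · have hmem : ∀ m, (c m : ℂ) ∈ spectrum ℂ (∑' n, c n • p n) := fun m => by
      refine mem_spectrum_of_mul_eq_smul (hp0 m) ?_
      rw [← hsum.tsum_mul_right, tsum_eq_single m fun n hn => by
        rw [smul_mul_assoc, horth hn, smul_zero]]
      rw [smul_mul_assoc, (hp m).isIdempotentElem.eq, Complex.coe_smul]
    refine Set.infinite_of_injective_forall_mem (fun m n hmn => ?_) hmem
    exact pow_right_injective₀ (by norm_num) (by norm_num) (Complex.ofReal_injective hmn)

theorem IsStarNormal.exists_isStarProjection_mul_eq_smul {a : B} [IsStarNormal a]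
    (ha : (spectrum ℂ a).Finite) {μ : ℂ} (hμ : μ ∈ spectrum ℂ a) :
    ∃ e : B, IsStarProjection e ∧ e ≠ 0 ∧ a * e = μ • e ∧ e * a = μ • e := by
  set f : ℂ → ℂ := fun z => if z = μ then 1 else 0
  have hf : ContinuousOn f (spectrum ℂ a) := ha.continuousOn f
  have hmul : a * cfc f a = μ • cfc f a := by
    nth_rw 1 [← cfc_id' ℂ a]
    rw [← cfc_smul μ f a, ← cfc_mul (fun z => z) f a]
    refine cfc_congr fun z _ => ?_
    by_cases hz : z = μ <;> simp [f, hz]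
  refine ⟨cfc f a, ?_, fun h0 => ?_, hmul, ?_⟩
  · refine isStarProjection_iff_spectrum_subset_and_isStarNormal.mpr ⟨?_, cfc_predicate f a⟩
    rw [cfc_map_spectrum f a]
    rintro _ ⟨z, -, rfl⟩
    by_cases hz : z = μ <;> simp [f, hz]
  · simpa [f] using (eqOn_of_cfc_eq_cfc (h0.trans (cfc_zero ℂ a).symm)) hμ
  · rw [← hmul]
    simpa [cfc_id' ℂ a] using (cfc_commute_cfc f (fun z => z) a).eq

/-- Minimality of a projection `p` is expressed through its corner: `p B p = ℂ p`. -/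
def IsMinimalProjection (p : B) : Prop :=
  IsStarProjection p ∧ p ≠ 0 ∧ ∀ x : B, ∃ c : ℂ, p * x * p = c • p

theorem IsMinimalProjection.exists_mul_mul_mem_span_singleton {p q : B}
    (hp : IsMinimalProjection p) (hq : IsMinimalProjection q) :
    ∃ v : B, ∀ x : B, p * x * q ∈ ℂ ∙ v := by
  by_cases hzero : ∀ x, p * x * q = 0
  · exact ⟨0, fun x => by simp [hzero x]⟩
  obtain ⟨x₀, hw⟩ := not_forall.mp hzero
  set w := p * x₀ * q
  have hpp : p * p = p := hp.1.isIdempotentElem.eq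
  have hqq : q * q = q := hq.1.isIdempotentElem.eq
  have hstar : star w = q * star x₀ * p := by
    simp only [w, star_mul, hp.1.isSelfAdjoint.star_eq, hq.1.isSelfAdjoint.star_eq, mul_assoc]
  have hwy : ∀ x, star w * (p * x * q) = q * (star x₀ * p * x) * q := fun x => by
    simp only [hstar, mul_assoc, ← mul_assoc p p, hpp]
  obtain ⟨α, hα⟩ := hq.2.2 (star x₀ * p * x₀)
  obtain ⟨β, hβ⟩ := hp.2.2 (x₀ * q * star x₀)
  have hα0 : α ≠ 0 := by
    rintro rfl
    exact hw ((CStarRing.star_mul_self_eq_zero_iff w).mp (by rw [hwy, hα, zero_smul]))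
  have hβ' : w * star w = β • p := by
    rw [← hβ, hstar]
    simp only [w, mul_assoc, ← mul_assoc q q, hqq]
  have hβ0 : β ≠ 0 := by
    rintro rfl
    exact hw ((CStarRing.mul_star_self_eq_zero_iff w).mp (by rw [hβ', zero_smul]))
  refine ⟨w, fun x => ?_⟩
  obtain ⟨c, hc⟩ := hq.2.2 (star x₀ * p * x)
  set z := p * x * q - (c / α) • w
  have hwz : star w * z = 0 := by
    rw [mul_sub, mul_smul_comm, hwy, hc, hwy, hα, smul_smul, div_mul_cancel₀ c hα0, sub_self]
  have hpz : p * z = z := by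
    simp only [z, w, mul_sub, mul_smul_comm, ← mul_assoc, hpp]
  have hz : β • z = 0 :=
    calc β • z = w * star w * z := by rw [hβ', smul_mul_assoc, hpz]
      _ = 0 := by rw [mul_assoc, hwz, mul_zero]
  rw [Submodule.mem_span_singleton]
  exact ⟨c / α, (sub_eq_zero.mp ((smul_eq_zero.mp hz).resolve_left hβ0)).symm⟩

end CStarAlgebra

section SpectrallyFinite
variable {B : Type*} [CStarAlgebra B] [PartialOrder B] [StarOrderedRing B]
  (hspec : ∀ a : B, IsSelfAdjoint a → (spectrum ℂ a).Finite)
include hspec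

theorem IsStarProjection.exists_lt_of_not_isMinimalProjection {q : B} (hq : IsStarProjection q)
    (hq0 : q ≠ 0) (hnot : ¬ IsMinimalProjection q) :
    ∃ r : B, IsStarProjection r ∧ r ≠ 0 ∧ r < q := by
  obtain ⟨h, hh, hne⟩ : ∃ h, IsSelfAdjoint h ∧ ∀ c : ℂ, q * h * q ≠ c • q := by
    by_contra! H
    exact hnot ⟨hq, hq0, exists_mul_mul_eq_smul_of_forall_isSelfAdjoint H⟩
  set k := q * h * q
  have hk : IsSelfAdjoint k := by
    simpa [k, hq.isSelfAdjoint.star_eq, mul_assoc] using hh.conjugate q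
  have hkq : k * q = k := by rw [mul_assoc, hq.isIdempotentElem.eq]
  obtain ⟨μ, hμ, hμ0⟩ : ∃ μ ∈ spectrum ℂ k, μ ≠ 0 := by
    by_contra! H
    exact hne 0 (by rw [zero_smul]; exact CFC.eq_zero_of_spectrum_subset_zero k H)
  have := hk.isStarNormal
  obtain ⟨e, he, he0, hke, hek⟩ := IsStarNormal.exists_isStarProjection_mul_eq_smul (hspec k hk) hμ
  -- `e = μ⁻¹ • e * k` inherits `k * q = k`
  have heq : e * q = e :=
    calc e * q = μ⁻¹ • (e * k * q) := by
          rw [hek, smul_mul_assoc, smul_smul, inv_mul_cancel₀ hμ0, one_smul]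
      _ = e := by rw [mul_assoc, hkq, hek, smul_smul, inv_mul_cancel₀ hμ0, one_smul]
  refine ⟨e, he, he0, lt_of_le_of_ne ((he.le_iff_mul_eq_left hq).mpr heq) fun heq' => hne μ ?_⟩
  rw [← hkq, ← heq', hke]

theorem wellFoundedLT_isStarProjection : WellFoundedLT {p : B // IsStarProjection p} := by
  refine ⟨wellFounded_iff_isEmpty_descending_chain.mpr ⟨fun ⟨f, hf⟩ => ?_⟩⟩
  have hanti : StrictAnti f := strictAnti_nat_of_succ_lt hf
  set d : ℕ → B := fun n => (f n : B) - f (n + 1)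
  have hd : ∀ n, IsStarProjection (d n) := fun n =>
    ((f (n + 1)).2.le_iff_sub (f n).2).mp (hf n).le
  have hd0 : ∀ n, d n ≠ 0 := fun n => sub_ne_zero.mpr (Subtype.coe_injective.ne (hf n).ne')
  have hdf : ∀ n m, n < m → d n * f m = 0 ∧ (f m : B) * d n = 0 := by
    intro n m hnm
    have h₁ : (f m : B) ≤ f n := hanti.antitone hnm.le
    have h₂ : (f m : B) ≤ f (n + 1) := hanti.antitone hnm
    simp only [d, sub_mul, mul_sub, ((f m).2.le_iff_mul_eq_left (f n).2).mp h₁,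
      ((f m).2.le_iff_mul_eq_left (f (n + 1)).2).mp h₂,
      ((f m).2.le_iff_mul_eq_right (f n).2).mp h₁,
      ((f m).2.le_iff_mul_eq_right (f (n + 1)).2).mp h₂, sub_self, and_self]
  have hdd : ∀ n m, n < m → d n * d m = 0 ∧ d m * d n = 0 := fun n m hnm =>
    ⟨by rw [show d m = f m - f (m + 1) from rfl, mul_sub, (hdf n m hnm).1,
          (hdf n (m + 1) (by omega)).1, sub_self],
      by rw [show d m = f m - f (m + 1) from rfl, sub_mul, (hdf n m hnm).2,
          (hdf n (m + 1) (by omega)).2, sub_self]⟩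
  obtain ⟨a, ha, hinf⟩ := exists_isSelfAdjoint_spectrum_infinite hd hd0 fun n m hnm =>
    hnm.lt_or_gt.elim (fun h => (hdd n m h).1) fun h => (hdd m n h).2
  exact hinf (hspec a ha)

theorem IsStarProjection.exists_isMinimalProjection_le {q : B} (hq : IsStarProjection q)
    (hq0 : q ≠ 0) : ∃ m : B, IsMinimalProjection m ∧ m ≤ q := by
  have := wellFoundedLT_isStarProjection hspec
  obtain ⟨m, ⟨hm0, hmq⟩, hmin⟩ := wellFounded_lt.has_min
    {r : {p : B // IsStarProjection p} | (r : B) ≠ 0 ∧ (r : B) ≤ q} ⟨⟨q, hq⟩, hq0, le_rfl⟩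
  refine ⟨m, ?_, hmq⟩
  by_contra hnot
  obtain ⟨r, hr, hr0, hrm⟩ := m.2.exists_lt_of_not_isMinimalProjection hspec hm0 hnot
  exact hmin ⟨r, hr⟩ ⟨hr0, hrm.le.trans hmq⟩ hrm

theorem IsStarProjection.exists_sum_eq {e : B} (he : IsStarProjection e) :
    ∃ (n : ℕ) (p : Fin n → B), (∀ i, IsMinimalProjection (p i)) ∧ ∑ i, p i = e := by
  have := wellFoundedLT_isStarProjection hspec
  suffices ∀ e : {p : B // IsStarProjection p}, ∃ (n : ℕ) (p : Fin n → B),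
      (∀ i, IsMinimalProjection (p i)) ∧ ∑ i, p i = e from this ⟨e, he⟩
  intro e
  induction e using WellFoundedLT.induction with
  | _ e ih =>
  by_cases he0 : (e : B) = 0
  · exact ⟨0, Fin.elim0, fun i => i.elim0, by simp [he0]⟩
  obtain ⟨m, hm, hme⟩ := e.2.exists_isMinimalProjection_le hspec he0
  have hm_pos : 0 < m := lt_of_le_of_ne hm.1.nonneg (Ne.symm hm.2.1)
  obtain ⟨n, p, hp, hsum⟩ := ih ⟨e - m, (hm.1.le_iff_sub e.2).mp hme⟩ (sub_lt_self _ hm_pos)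
  exact ⟨n + 1, Fin.cons m p, Fin.cases hm hp, by simp [Fin.sum_univ_succ, hsum]⟩

end SpectrallyFinite

theorem CStarAlgebra.finiteDimensional_of_forall_spectrum_finite {B : Type*} [CStarAlgebra B]
    (hspec : ∀ a : B, IsSelfAdjoint a → (spectrum ℂ a).Finite) : FiniteDimensional ℂ B := by
  let := CStarAlgebra.spectralOrder B
  have := CStarAlgebra.spectralOrderedRing B
  obtain ⟨n, p, hp, hsum⟩ := (IsStarProjection.one B).exists_sum_eq hspec
  choose v hv using fun i j => (hp i).exists_mul_mul_mem_span_singleton (hp j)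
  have hspan : ∀ x : B, x ∈ Submodule.span ℂ (Set.range (Function.uncurry v)) := by
    intro x
    rw [← one_mul x, ← mul_one (1 * x), ← hsum]
    simp only [Finset.sum_mul, Finset.mul_sum]
    exact Submodule.sum_mem _ fun j _ => Submodule.sum_mem _ fun i _ =>
      Submodule.span_mono (Set.singleton_subset_iff.mpr (Set.mem_range_self (i, j))) (hv i j x)
  exact Module.finite_def.mpr (Submodule.fg_def.mpr ⟨_, Set.finite_range _,
    eq_top_iff.mpr fun x _ => hspan x⟩)

/-- Every infinite-dimensional C*-algebra contains a positive element whose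
spectrum (quasispectrum, i.e. the spectrum in the unitization) is infinite. -/
theorem stmt_0 {A : Type*} [NonUnitalCStarAlgebra A] [PartialOrder A] [StarOrderedRing A]
    (h : ¬ FiniteDimensional ℂ A) :
    ∃ a : A, 0 ≤ a ∧ (quasispectrum ℂ a).Infinite := by
  by_contra! hfin
  have : FiniteDimensional ℂ (Unitization ℂ A) :=
    CStarAlgebra.finiteDimensional_of_forall_spectrum_finite fun b hb => ?_
  · exact h (.of_injective (Unitization.inrHom ℂ ℂ A) Unitization.inr_injective)
  have hsnd : IsSelfAdjoint b.snd := by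
    rw [IsSelfAdjoint, ← Unitization.snd_star, hb.star_eq]
  have hsq : (spectrum ℂ ((b.snd : Unitization ℂ A) * b.snd)).Finite := by
    rw [← Unitization.inr_mul, ← Unitization.quasispectrum_eq_spectrum_inr ℂ]
    exact hfin _ (by simpa [hsnd.star_eq] using star_mul_self_nonneg b.snd)
  rw [← Unitization.inl_fst_add_inr_snd_eq b, ← Unitization.algebraMap_eq_inl,
    ← spectrum.singleton_add_eq]
  exact (Set.finite_singleton _).add (spectrum_finite_of_spectrum_mul_self_finite _ hsq)
end

section
/- Let A be a C*-algebra and a, b positive elements with ‖a − b‖ < ε. Then (a − ε)₊ is Cuntz subequivalent to b; that is, there exists a sequence (vₙ) in A with ‖vₙ b vₙ* − (a − ε)₊‖ → 0. -/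
/-!
From `a - b ≤ ‖a - b‖ < ε` we get `a - ε ≤ b`. Conjugating by `s = k(a)`, where `k` is a continuous
ramp vanishing on `(-∞, ε]` and equal to `1` on `[ε + δ, ∞)`, turns `a - ε` into a positive element
`k(a)² (a - ε)` which is `δ`-close to `(a - ε)₊` and lies below `s b s ≾ b`. A positive `c ≤ b` is
Cuntz below `b`, witnessed by `√c (b + δ)^(-1/2)`. Finally `{x | x ≾ b}` is the closure of
`{v b v*}`, hence closed, so `(a - ε)₊ ≾ b`.
-/

open Filter Topology

/-- Cuntz subequivalence: `a ≾ b` iff there is a sequence `(vₙ)` in `A` with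
`vₙ b vₙ* → a` in norm. -/
def CuntzSubequiv {A : Type*} [NonUnitalCStarAlgebra A] (a b : A) : Prop :=
  ∃ v : ℕ → A, Tendsto (fun n => v n * b * star (v n)) atTop (nhds a)

noncomputable def ramp (δ u : ℝ) : ℝ := min 1 (max 0 u / δ)

theorem continuous_ramp (δ : ℝ) : Continuous (ramp δ) := by
  unfold ramp; fun_prop

theorem ramp_mul_mul_ramp_nonneg {δ : ℝ} (hδ : 0 ≤ δ) (u : ℝ) :
    0 ≤ ramp δ u * u * ramp δ u := by
  rcases le_total u 0 with hu | hu
  · simp [ramp, max_eq_left hu]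
  · have : 0 ≤ ramp δ u := le_min zero_le_one (by positivity)
    positivity

theorem abs_ramp_mul_mul_ramp_sub_le {δ : ℝ} (hδ : 0 < δ) (u : ℝ) :
    |ramp δ u * u * ramp δ u - max 0 u| ≤ δ := by
  rcases le_total u 0 with hu | hu
  · simp [ramp, max_eq_left hu, hδ.le]
  rcases le_total δ u with hδu | huδ
  · simp [ramp, max_eq_right hu, (one_le_div hδ).2 hδu, hδ.le]
  · have hr : ramp δ u = u / δ := by
      rw [ramp, max_eq_right hu, min_eq_right ((div_le_one hδ).2 huδ)]
    have hr0 : 0 ≤ u / δ := by positivity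
    have hr1 : u / δ ≤ 1 := (div_le_one hδ).2 huδ
    rw [hr, max_eq_right hu, abs_le]
    constructor <;> nlinarith [mul_le_one₀ hr1 hr0 hr1]

theorem Real.sqrt_mul_mul_sqrt {x : ℝ} (hx : 0 ≤ x) (y : ℝ) : √x * y * √x = x * y := by
  rw [mul_right_comm, Real.mul_self_sqrt hx]

namespace CuntzSubequiv

variable {A : Type*} [NonUnitalCStarAlgebra A] {a b c : A}

theorem iff_mem_closure :
    CuntzSubequiv a b ↔ a ∈ closure (Set.range fun v : A => v * b * star v) := by
  rw [mem_closure_iff_seq_limit]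
  constructor
  · rintro ⟨v, hv⟩
    exact ⟨_, fun n => ⟨v n, rfl⟩, hv⟩
  · rintro ⟨x, hx, hlim⟩
    choose v hv using hx
    exact ⟨v, by simpa only [hv] using hlim⟩

theorem isClosed_setOf (b : A) : IsClosed {a : A | CuntzSubequiv a b} := by
  simp only [iff_mem_closure, Set.ofPred_mem_eq, isClosed_closure]

theorem conj_self (x b : A) : CuntzSubequiv (x * b * star x) b :=
  ⟨fun _ => x, tendsto_const_nhds⟩

theorem trans (hab : CuntzSubequiv a b) (hbc : CuntzSubequiv b c) : CuntzSubequiv a c := by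
  rw [iff_mem_closure] at *
  refine closure_minimal ?_ isClosed_closure hab
  rintro _ ⟨v, rfl⟩
  refine map_mem_closure (f := fun y => v * y * star v) (by fun_prop) hbc ?_
  rintro _ ⟨w, rfl⟩
  exact ⟨v * w, by simp only [star_mul, mul_assoc]⟩

end CuntzSubequiv

section CStarAlgebra

variable {A : Type*} [CStarAlgebra A]

theorem cfc_mul_mul_cfc (f g h : ℝ → ℝ) (a : A)
    (hf : ContinuousOn f (spectrum ℝ a) := by cfc_cont_tac)
    (hg : ContinuousOn g (spectrum ℝ a) := by cfc_cont_tac)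
    (hh : ContinuousOn h (spectrum ℝ a) := by cfc_cont_tac) :
    cfc f a * cfc g a * cfc h a = cfc (fun t => f t * g t * h t) a := by
  rw [← cfc_mul f g a, ← cfc_mul _ h a]

variable [PartialOrder A] [StarOrderedRing A]

theorem exists_conj_add_star_mul_self_eq_one {b : A} (hb : 0 ≤ b) {δ : ℝ} (hδ : 0 < δ) :
    ∃ r q : A, r * b * star r + star q * q = 1 ∧ ‖q * b * star q‖ ≤ δ := by
  have hspec : ∀ t ∈ spectrum ℝ b, 0 ≤ t := fun t ht => spectrum_nonneg_of_nonneg hb ht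
  have hpos (t : ℝ) : 0 < max t 0 + δ := by positivity
  -- `r = (b + δ)^(-1/2)` and `q = (δ / (b + δ))^(1/2)`, so `r b r + q q = (b + δ) / (b + δ)`
  set φ : ℝ → ℝ := fun t => (max t 0 + δ)⁻¹
  have hφ0 (t : ℝ) : 0 ≤ φ t := (inv_pos.2 (hpos t)).le
  have hφ : Continuous φ := Continuous.inv₀ (by fun_prop) fun t => (hpos t).ne'
  have hr : Continuous fun t => √(φ t) := by fun_prop
  have hq : Continuous fun t => √(δ * φ t) := by fun_prop
  have hb' : cfc (fun t : ℝ => t) b = b := cfc_id' ℝ b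
  refine ⟨cfc (fun t => √(φ t)) b, cfc (fun t => √(δ * φ t)) b, ?_, ?_⟩
  · rw [IsSelfAdjoint.cfc.star_eq, IsSelfAdjoint.cfc.star_eq]
    nth_rw 2 [← hb']
    rw [cfc_mul_mul_cfc _ _ _ b hr.continuousOn (by fun_prop) hr.continuousOn,
      ← cfc_mul _ _ b hq.continuousOn hq.continuousOn,
      ← cfc_add (a := b) _ _ (by fun_prop) (by fun_prop), ← cfc_const_one ℝ b]
    refine cfc_congr fun t ht => ?_
    have htδ : 0 < t + δ := by linarith [hspec t ht]
    rw [Real.sqrt_mul_mul_sqrt (hφ0 t), Real.mul_self_sqrt (mul_nonneg hδ.le (hφ0 t))]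
    simp only [φ, max_eq_left (hspec t ht)]
    field_simp
  · rw [IsSelfAdjoint.cfc.star_eq]
    nth_rw 2 [← hb']
    rw [cfc_mul_mul_cfc _ _ _ b hq.continuousOn (by fun_prop) hq.continuousOn]
    refine norm_cfc_le hδ.le fun t ht => ?_
    have ht0 := hspec t ht
    rw [Real.sqrt_mul_mul_sqrt (mul_nonneg hδ.le (hφ0 t)), Real.norm_eq_abs,
      abs_of_nonneg (by positivity)]
    simp only [φ, max_eq_left ht0]
    rw [mul_assoc, mul_le_iff_le_one_right hδ, inv_mul_le_one₀ (by positivity)]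
    linarith

theorem CuntzSubequiv.star_mul_self_of_le {x b : A} (h : x * star x ≤ b) :
    CuntzSubequiv (star x * x) b := by
  rw [CuntzSubequiv.iff_mem_closure, Metric.mem_closure_iff]
  intro η hη
  obtain ⟨r, q, hrq, hq⟩ :=
    exists_conj_add_star_mul_self_eq_one ((mul_star_self_nonneg x).trans h) (half_pos hη)
  refine ⟨_, ⟨star x * r, rfl⟩, ?_⟩
  have hdiff : star x * x - star x * r * b * star (star x * r) = star (q * x) * (q * x) :=
    calc star x * x - star x * r * b * star (star x * r)
        = star x * (1 - r * b * star r) * x := by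
          simp only [star_mul, star_star]; noncomm_ring
      _ = star (q * x) * (q * x) := by
          rw [← hrq, add_sub_cancel_left, star_mul]; noncomm_ring
  calc dist (star x * x) (star x * r * b * star (star x * r))
      = ‖q * (x * star x) * star q‖ := by
        rw [dist_eq_norm, hdiff, CStarRing.norm_star_mul_self, ← CStarRing.norm_self_mul_star,
          star_mul, ← mul_assoc, mul_assoc q]
    _ ≤ ‖q * b * star q‖ := CStarAlgebra.norm_le_norm_of_nonneg_of_le
        (star_right_conjugate_nonneg (mul_star_self_nonneg x) q)
        (star_right_conjugate_le_conjugate h q)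
    _ < η := hq.trans_lt (half_lt_self hη)

theorem CuntzSubequiv.of_le {a b : A} (ha : 0 ≤ a) (hab : a ≤ b) : CuntzSubequiv a b := by
  have h := CuntzSubequiv.star_mul_self_of_le (x := CFC.sqrt a) (b := b)
  rw [(CFC.sqrt_nonneg a).star_eq, CFC.sqrt_mul_sqrt_self a ha] at h
  exact h hab

theorem sub_algebraMap_le_of_norm_sub_le {a b : A} (hab : IsSelfAdjoint (a - b)) {ε : ℝ}
    (h : ‖a - b‖ ≤ ε) : a - algebraMap ℝ A ε ≤ b := by
  rw [sub_le_comm]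
  exact hab.le_algebraMap_norm_self.trans (algebraMap_mono A h)

theorem exists_le_conj_near_cfc_posPart {a b : A} (ha : IsSelfAdjoint a) {ε : ℝ}
    (hab : a - algebraMap ℝ A ε ≤ b) {δ : ℝ} (hδ : 0 < δ) :
    ∃ c s : A, 0 ≤ c ∧ c ≤ s * b * star s ∧
      ‖c - cfc (fun t : ℝ => max 0 (t - ε)) a‖ ≤ δ := by
  set k : ℝ → ℝ := fun t => ramp δ (t - ε)
  have hk : Continuous k := (continuous_ramp δ).comp (by fun_prop)
  have hshift : a - algebraMap ℝ A ε = cfc (fun t : ℝ => t - ε) a := by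
    rw [cfc_sub (fun t : ℝ => t) (fun _ => ε) a, cfc_id' ℝ a, cfc_const ε a]
  refine ⟨cfc (fun t => k t * (t - ε) * k t) a, cfc k a, ?_, ?_, ?_⟩
  · exact cfc_nonneg fun t _ => ramp_mul_mul_ramp_nonneg hδ.le _
  · rw [IsSelfAdjoint.cfc.star_eq, ← cfc_mul_mul_cfc k _ k a hk.continuousOn (by fun_prop)
      hk.continuousOn, ← hshift]
    exact IsSelfAdjoint.cfc.conjugate_le_conjugate hab
  · rw [← cfc_sub _ _ a (by fun_prop) (by fun_prop)]
    exact norm_cfc_le hδ.le fun t _ => abs_ramp_mul_mul_ramp_sub_le hδ (t - ε)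

end CStarAlgebra

/-- If `a, b` are positive with `‖a − b‖ < ε`, then `(a − ε)₊ ≾ b`. -/
theorem stmt_5 {A : Type*} [CStarAlgebra A] [PartialOrder A] [StarOrderedRing A]
    (a b : A) (ha : 0 ≤ a) (hb : 0 ≤ b) (ε : ℝ) (h : ‖a - b‖ < ε) :
    CuntzSubequiv (cfc (fun t : ℝ => max 0 (t - ε)) a) b := by
  have hab : a - algebraMap ℝ A ε ≤ b :=
    sub_algebraMap_le_of_norm_sub_le (ha.isSelfAdjoint.sub hb.isSelfAdjoint) h.le
  refine (CuntzSubequiv.isClosed_setOf b).closure_subset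
    (Metric.mem_closure_iff.2 fun δ hδ => ?_)
  obtain ⟨c, s, hc, hcb, hdist⟩ :=
    exists_le_conj_near_cfc_posPart ha.isSelfAdjoint hab (half_pos hδ)
  refine ⟨c, (CuntzSubequiv.of_le hc hcb).trans (CuntzSubequiv.conj_self s b), ?_⟩
  rw [dist_comm, dist_eq_norm]
  exact hdist.trans_lt (half_lt_self hδ)
end

section
/- If a ≾ b for positive elements a, b of a unital C*-algebra A and τ is a tracial state on A, then d_τ(a) ≤ d_τ(b), where d_τ(x) = lim_{n→∞} τ(x^{1/n}). -/
/-!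
Write `y = v b v*` for a term of the sequence witnessing `a ≾ b` with `‖a - y‖ ≤ ε`. Operator
monotonicity and subadditivity of `t ↦ t ^ p` (`0 < p ≤ 1`) give `τ(a^p) ≤ τ(y^p) + ε^p`. With
`x = v b^{1/2}` we have `y = x x*`, and `τ(f(x x*)) = τ(f(x* x))` for continuous `f`: for
polynomials this is traciality, and the general case follows by Weierstrass approximation. Moreover
`x* x ≤ (‖v‖² + 1) b`, and `d_τ` is monotone and invariant under positive scaling. Finally
`τ(c^p) ≤ R^p d_τ(c)` whenever `‖c‖ ≤ R`, because `t^p ≤ R^(p-q) t^q` on `[0, R]` for `q ≤ p`.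
Hence `τ(a^p) ≤ (‖a‖ + 1)^p d_τ(b) + ε^p`; let `ε → 0`, then `p = 1/n → 0`.
-/

open Filter Topology
open scoped ComplexOrder

/-- The dimension function associated to a trace: `d_τ(x) = lim_n τ(x^{1/n})`
(realized as a `limsup`, which agrees with the limit whenever it exists). -/
noncomputable def dTau {A : Type*} [CStarAlgebra A] [PartialOrder A] [StarOrderedRing A]
    (τ : A →L[ℂ] ℂ) (x : A) : ℝ :=
  Filter.limsup (fun n : ℕ => (τ (cfc (fun t : ℝ => t ^ ((n : ℝ)⁻¹)) x)).re) Filter.atTop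

open Polynomial CFC
open scoped NNReal

lemma limsup_le_mul_limsup_of_le_mul {ι : Type*} {l : Filter ι} [l.NeBot] {u s w : ι → ℝ}
    {c : ℝ} (hs : Tendsto s l (𝓝 c)) (hs0 : ∀ i, 0 ≤ s i) (hw0 : ∀ i, 0 ≤ w i)
    (hw : IsBoundedUnder (· ≤ ·) l w) (hu : IsCoboundedUnder (· ≤ ·) l u)
    (h : ∀ᶠ i in l, u i ≤ s i * w i) : limsup u l ≤ c * limsup w l := by
  have hs_bdd : IsBoundedUnder (· ≤ ·) l s := hs.isBoundedUnder_le
  calc limsup u l ≤ limsup (s * w) l :=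
        limsup_le_limsup h hu (isBoundedUnder_le_mul_of_nonneg
          (.of_forall hs0) hs_bdd (.of_forall hw0) hw)
    _ ≤ limsup s l * limsup w l :=
        limsup_mul_le (.of_forall hs0) hs_bdd (.of_forall hw0) hw
    _ = c * limsup w l := by rw [hs.limsup_eq]

lemma tendsto_rpow_inv_natCast_atTop {c : ℝ} (hc : c ≠ 0) :
    Tendsto (fun n : ℕ => c ^ (n : ℝ)⁻¹) atTop (𝓝 1) := by
  simpa [Function.comp_def] using
    (Real.continuousAt_const_rpow hc).tendsto.comp tendsto_inv_atTop_nhds_zero_nat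

lemma inv_natCast_mem_Icc (n : ℕ) : (n : ℝ)⁻¹ ∈ Set.Icc (0 : ℝ) 1 :=
  ⟨by positivity, Nat.cast_inv_le_one n⟩

lemma norm_cfc_sub_aeval_le {A : Type*} [CStarAlgebra A] {z : A} (hz : IsSelfAdjoint z)
    {f : ℝ → ℝ} (hf : ContinuousOn f (spectrum ℝ z)) (p : ℝ[X]) {ε : ℝ} (hε : 0 ≤ ε)
    (h : ∀ t ∈ spectrum ℝ z, |f t - p.eval t| ≤ ε) : ‖cfc f z - aeval z p‖ ≤ ε := by
  rw [← cfc_polynomial p z, ← cfc_sub f _ z]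
  exact norm_cfc_le hε h

namespace CFC

variable {A : Type*} [CStarAlgebra A] [PartialOrder A] [StarOrderedRing A]

lemma rpow_le_smul_rpow_of_norm_le {x : A} (hx : 0 ≤ x) {R p q : ℝ} (hR : ‖x‖ ≤ R)
    (hq : 0 < q) (hqp : q ≤ p) : x ^ p ≤ R ^ (p - q) • x ^ q := by
  nontriviality A
  have hcq := (Real.continuous_rpow_const hq.le).continuousOn (s := spectrum ℝ x)
  rw [rpow_eq_cfc_real hx, rpow_eq_cfc_real hx, ← cfc_smul _ _ _ hcq]
  refine cfc_mono (fun t ht => ?_) (by fun_prop (disch := linarith))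
    (by fun_prop (disch := linarith))
  have ht0 : 0 ≤ t := spectrum_nonneg_of_nonneg hx ht
  have htR : t ≤ R := (le_abs_self t).trans ((spectrum.norm_le_norm_of_mem ht).trans hR)
  calc t ^ p = t ^ q * t ^ (p - q) := by rw [← Real.rpow_add' ht0 (by linarith), add_sub_cancel]
    _ ≤ t ^ q * R ^ (p - q) := by gcongr
    _ = R ^ (p - q) • t ^ q := by rw [smul_eq_mul, mul_comm]

lemma smul_rpow {x : A} (hx : 0 ≤ x) {r : ℝ} (hr : 0 ≤ r) {p : ℝ} (hp : 0 ≤ p) :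
    (r • x) ^ p = r ^ p • x ^ p := by
  have hc := (Real.continuous_rpow_const hp).continuousOn (s := spectrum ℝ x)
  rw [rpow_eq_cfc_real (smul_nonneg hr hx), rpow_eq_cfc_real hx,
    ← cfc_comp_smul r _ x (Real.continuous_rpow_const hp).continuousOn, ← cfc_smul _ _ _ hc]
  exact cfc_congr fun t ht => Real.mul_rpow hr (spectrum_nonneg_of_nonneg hx ht)

lemma add_algebraMap_rpow_le {y : A} (hy : 0 ≤ y) {ε p : ℝ} (hε : 0 ≤ ε)
    (hp : p ∈ Set.Icc 0 1) :
    (y + algebraMap ℝ A ε) ^ p ≤ y ^ p + algebraMap ℝ A (ε ^ p) := by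
  have hc := Real.continuous_rpow_const hp.1
  have hshift : y + algebraMap ℝ A ε = cfc (· + ε) y := by
    rw [cfc_add_const ε (fun t => t) y continuousOn_id, cfc_id' ℝ y]
  rw [hshift, rpow_eq_cfc_real (cfc_nonneg fun t ht => by
      have := spectrum_nonneg_of_nonneg hy ht; positivity),
    ← cfc_comp' (· ^ p) (· + ε) y hc.continuousOn, rpow_eq_cfc_real hy,
    ← cfc_add_const _ _ _ hc.continuousOn]
  exact cfc_mono (fun t ht =>
    Real.rpow_add_le_add_rpow (spectrum_nonneg_of_nonneg hy ht) hε hp.1 hp.2)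

end CFC

section Trace

variable {A : Type*} [CStarAlgebra A] (τ : A →L[ℂ] ℂ)

lemma map_pow_mul_comm (htr : ∀ x y : A, τ (x * y) = τ (y * x)) (x y : A) (k : ℕ) :
    τ ((x * y) ^ k) = τ ((y * x) ^ k) := by
  cases k with
  | zero => simp
  | succ k => rw [pow_succ', mul_assoc, htr, mul_assoc, mul_pow_mul, ← mul_assoc, ← pow_succ']

lemma map_aeval_mul_comm (htr : ∀ x y : A, τ (x * y) = τ (y * x)) (x y : A) (p : ℝ[X]) :
    τ (aeval (x * y) p) = τ (aeval (y * x) p) := by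
  simp only [aeval_eq_sum_range, map_sum, ContinuousLinearMap.map_smul_of_tower,
    map_pow_mul_comm τ htr]

lemma map_cfc_mul_star_self_eq (htr : ∀ x y : A, τ (x * y) = τ (y * x)) (x : A) {f : ℝ → ℝ}
    (hf : Continuous f) : τ (cfc f (x * star x)) = τ (cfc f (star x * x)) := by
  nontriviality A
  set R := ‖x‖ * ‖x‖
  refine eq_of_forall_dist_le fun ε hε => ?_
  obtain ⟨p, hp⟩ := exists_polynomial_near_of_continuousOn (-R) R f hf.continuousOn
    (ε / (2 * (‖τ‖ + 1))) (by positivity)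
  have approx : ∀ z : A, IsSelfAdjoint z → ‖z‖ = R →
      dist (τ (cfc f z)) (τ (aeval z p)) ≤ ε / 2 := by
    intro z hz hzR
    have hspec : ∀ t ∈ spectrum ℝ z, |f t - p.eval t| ≤ ε / (2 * (‖τ‖ + 1)) := fun t ht => by
      rw [abs_sub_comm]
      exact (hp t (hzR ▸ abs_le.mp (spectrum.norm_le_norm_of_mem ht))).le
    calc dist (τ (cfc f z)) (τ (aeval z p)) = ‖τ (cfc f z - aeval z p)‖ := by
          rw [dist_eq_norm, map_sub]
      _ ≤ ‖τ‖ * (ε / (2 * (‖τ‖ + 1))) :=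
          τ.le_opNorm_of_le (norm_cfc_sub_aeval_le hz hf.continuousOn p (by positivity) hspec)
      _ ≤ ε / 2 := by
          rw [mul_div_assoc', div_le_div_iff₀ (by positivity) two_pos]
          nlinarith [norm_nonneg τ]
  calc dist (τ (cfc f (x * star x))) (τ (cfc f (star x * x)))
      ≤ dist (τ (cfc f (x * star x))) (τ (aeval (x * star x) p))
        + dist (τ (aeval (star x * x) p)) (τ (cfc f (star x * x))) := by
        rw [map_aeval_mul_comm τ htr]; exact dist_triangle _ _ _
    _ ≤ ε / 2 + ε / 2 := by
        rw [dist_comm (τ (aeval _ p))]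
        gcongr
        · exact approx _ (.mul_star_self x) CStarRing.norm_self_mul_star
        · exact approx _ (.star_mul_self x) CStarRing.norm_star_mul_self
    _ = ε := add_halves ε

lemma re_map_real_smul (r : ℝ) (x : A) : (τ (r • x)).re = r * (τ x).re := by
  simp [ContinuousLinearMap.map_smul_of_tower]

lemma re_map_algebraMap (hone : τ 1 = 1) (r : ℝ) : (τ (algebraMap ℝ A r)).re = r := by
  simp [Algebra.algebraMap_eq_smul_one, ContinuousLinearMap.map_smul_of_tower, hone]

end Trace

section PositiveTrace

variable {A : Type*} [CStarAlgebra A] [PartialOrder A] [StarOrderedRing A] (τ : A →L[ℂ] ℂ)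

lemma re_map_mono (hpos : ∀ x : A, 0 ≤ x → 0 ≤ τ x) {x y : A} (h : x ≤ y) :
    (τ x).re ≤ (τ y).re := by
  simpa using (Complex.le_def.mp (hpos _ (sub_nonneg.mpr h))).1

lemma re_map_nonneg (hpos : ∀ x : A, 0 ≤ x → 0 ≤ τ x) {x : A} (hx : 0 ≤ x) :
    0 ≤ (τ x).re := by
  simpa using re_map_mono τ hpos hx

lemma re_map_rpow_le_norm_rpow (hpos : ∀ x : A, 0 ≤ x → 0 ≤ τ x) (hone : τ 1 = 1) {x : A}
    (hx : 0 ≤ x) {p : ℝ} (hp : p ∈ Set.Icc 0 1) : (τ (x ^ p)).re ≤ ‖x‖ ^ p := by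
  have h : x ^ p ≤ (algebraMap ℝ≥0 A ‖x‖₊) ^ p :=
    rpow_le_rpow hp (IsSelfAdjoint.of_nonneg hx).le_algebraMap_norm_self
  rw [rpow_algebraMap, IsScalarTower.algebraMap_apply ℝ≥0 ℝ A] at h
  simpa [re_map_algebraMap τ hone] using re_map_mono τ hpos h

lemma dTau_eq_limsup_rpow {x : A} (hx : 0 ≤ x) :
    dTau τ x = limsup (fun n : ℕ => (τ (x ^ (n : ℝ)⁻¹)).re) atTop := by
  simp only [dTau, rpow_eq_cfc_real hx]

lemma isBoundedUnder_re_map_rpow_inv (hpos : ∀ x : A, 0 ≤ x → 0 ≤ τ x) (hone : τ 1 = 1)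
    {x : A} (hx : 0 ≤ x) :
    IsBoundedUnder (· ≤ ·) atTop (fun n : ℕ => (τ (x ^ (n : ℝ)⁻¹)).re) := by
  refine isBoundedUnder_of ⟨max 1 ‖x‖, fun n => ?_⟩
  calc (τ (x ^ (n : ℝ)⁻¹)).re ≤ ‖x‖ ^ (n : ℝ)⁻¹ :=
        re_map_rpow_le_norm_rpow τ hpos hone hx (inv_natCast_mem_Icc n)
    _ ≤ (max 1 ‖x‖) ^ (n : ℝ)⁻¹ := by gcongr; exact le_max_right _ _
    _ ≤ max 1 ‖x‖ := Real.rpow_le_self_of_one_le (le_max_left _ _) (Nat.cast_inv_le_one n)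

lemma dTau_nonneg (hpos : ∀ x : A, 0 ≤ x → 0 ≤ τ x) (hone : τ 1 = 1) {x : A} (hx : 0 ≤ x) :
    0 ≤ dTau τ x := by
  rw [dTau_eq_limsup_rpow τ hx]
  exact le_limsup_of_frequently_le (.of_forall fun n => re_map_nonneg τ hpos rpow_nonneg)
    (isBoundedUnder_re_map_rpow_inv τ hpos hone hx)

lemma re_map_rpow_le_mul_dTau (hpos : ∀ x : A, 0 ≤ x → 0 ≤ τ x) (hone : τ 1 = 1) {x : A}
    (hx : 0 ≤ x) {R p : ℝ} (hR : ‖x‖ ≤ R) (hp : 0 < p) :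
    (τ (x ^ p)).re ≤ R ^ p * dTau τ x := by
  have hs : Tendsto (fun n : ℕ => R ^ (p - (n : ℝ)⁻¹)) atTop (𝓝 (R ^ p)) := by
    have h := (tendsto_const_nhds (x := p)).sub (tendsto_inv_atTop_nhds_zero_nat (𝕜 := ℝ))
    rw [sub_zero] at h
    exact (Real.continuousAt_const_rpow' hp.ne').tendsto.comp h
  have hle : ∀ᶠ n : ℕ in atTop,
      (τ (x ^ p)).re ≤ R ^ (p - (n : ℝ)⁻¹) * (τ (x ^ (n : ℝ)⁻¹)).re := by
    filter_upwards [eventually_gt_atTop 0,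
      tendsto_inv_atTop_nhds_zero_nat.eventually (ge_mem_nhds hp)] with n hn hnp
    rw [← re_map_real_smul]
    exact re_map_mono τ hpos (rpow_le_smul_rpow_of_norm_le hx hR (by positivity) hnp)
  rw [dTau_eq_limsup_rpow τ hx]
  simpa using limsup_le_mul_limsup_of_le_mul hs
    (fun _ => Real.rpow_nonneg ((norm_nonneg x).trans hR) _)
    (fun _ => re_map_nonneg τ hpos rpow_nonneg) (isBoundedUnder_re_map_rpow_inv τ hpos hone hx)
    (isCoboundedUnder_le_of_le atTop fun _ => le_rfl) hle

lemma dTau_le_of_le_smul (hpos : ∀ x : A, 0 ≤ x → 0 ≤ τ x) (hone : τ 1 = 1) {b c : A}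
    (hb : 0 ≤ b) (hc : 0 ≤ c) {K : ℝ} (hK : 0 < K) (h : c ≤ K • b) : dTau τ c ≤ dTau τ b := by
  have hle : ∀ n : ℕ, (τ (c ^ (n : ℝ)⁻¹)).re ≤ K ^ (n : ℝ)⁻¹ * (τ (b ^ (n : ℝ)⁻¹)).re := by
    intro n
    rw [← re_map_real_smul, ← smul_rpow hb hK.le (inv_natCast_mem_Icc n).1]
    exact re_map_mono τ hpos (rpow_le_rpow (inv_natCast_mem_Icc n) h)
  rw [dTau_eq_limsup_rpow τ hc, dTau_eq_limsup_rpow τ hb]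
  simpa using limsup_le_mul_limsup_of_le_mul (tendsto_rpow_inv_natCast_atTop hK.ne')
    (fun _ => Real.rpow_nonneg hK.le _) (fun _ => re_map_nonneg τ hpos rpow_nonneg)
    (isBoundedUnder_re_map_rpow_inv τ hpos hone hb)
    (isCoboundedUnder_le_of_le atTop fun _ => re_map_nonneg τ hpos rpow_nonneg) (.of_forall hle)

lemma re_map_rpow_le_of_norm_sub_le (hpos : ∀ x : A, 0 ≤ x → 0 ≤ τ x) (hone : τ 1 = 1)
    {a y : A} (ha : IsSelfAdjoint a) (hy : 0 ≤ y) {ε p : ℝ} (h : ‖a - y‖ ≤ ε)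
    (hp : p ∈ Set.Icc 0 1) :
    (τ (a ^ p)).re ≤ (τ (y ^ p)).re + ε ^ p := by
  have hε : 0 ≤ ε := (norm_nonneg _).trans h
  have hay : a ≤ y + algebraMap ℝ A ε := by
    have := (ha.sub (.of_nonneg hy)).le_algebraMap_norm_self.trans (algebraMap_mono A h)
    rwa [sub_le_iff_le_add'] at this
  have := re_map_mono τ hpos ((rpow_le_rpow hp hay).trans (add_algebraMap_rpow_le hy hε hp))
  rwa [map_add, Complex.add_re, re_map_algebraMap τ hone] at this

lemma re_map_rpow_conj_le (hpos : ∀ x : A, 0 ≤ x → 0 ≤ τ x) (hone : τ 1 = 1)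
    (htr : ∀ x y : A, τ (x * y) = τ (y * x)) {b : A} (hb : 0 ≤ b) (v : A) {R p : ℝ}
    (hR : ‖v * b * star v‖ ≤ R) (hp : 0 < p) :
    (τ ((v * b * star v) ^ p)).re ≤ R ^ p * dTau τ b := by
  set x := v * sqrt b with hx
  have hs : star (sqrt b) = sqrt b := (IsSelfAdjoint.of_nonneg (sqrt_nonneg b)).star_eq
  have hvbv : v * b * star v = x * star x := by
    rw [hx, star_mul, hs, ← mul_assoc, mul_assoc v (sqrt b), sqrt_mul_sqrt_self b]
  have hxx : star x * x ≤ (‖v‖ ^ 2 + 1) • b := by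
    have hvv : star v * v ≤ algebraMap ℝ A (‖v‖ ^ 2 + 1) :=
      CStarAlgebra.star_mul_le_algebraMap_norm_sq.trans (algebraMap_mono A (by linarith))
    have h := star_left_conjugate_le_conjugate hvv (sqrt b)
    rw [hs, Algebra.algebraMap_eq_smul_one, mul_smul_comm, mul_one, smul_mul_assoc,
      sqrt_mul_sqrt_self b] at h
    convert h using 1
    rw [hx, star_mul, hs]
    noncomm_ring
  have hswap : τ ((x * star x) ^ p) = τ ((star x * x) ^ p) := by
    rw [rpow_eq_cfc_real (mul_star_self_nonneg x), rpow_eq_cfc_real (star_mul_self_nonneg x),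
      map_cfc_mul_star_self_eq τ htr x (Real.continuous_rpow_const hp.le)]
  have hxR : ‖star x * x‖ ≤ R := by
    rwa [CStarRing.norm_star_mul_self, ← CStarRing.norm_self_mul_star, ← hvbv]
  rw [hvbv, hswap]
  calc (τ ((star x * x) ^ p)).re ≤ R ^ p * dTau τ (star x * x) :=
        re_map_rpow_le_mul_dTau τ hpos hone (star_mul_self_nonneg x) hxR hp
    _ ≤ R ^ p * dTau τ b := by
        gcongr
        · exact Real.rpow_nonneg ((norm_nonneg _).trans hR) p
        · exact dTau_le_of_le_smul τ hpos hone hb (star_mul_self_nonneg x) (by positivity) hxx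

lemma re_map_rpow_le_of_cuntzSubequiv (hpos : ∀ x : A, 0 ≤ x → 0 ≤ τ x) (hone : τ 1 = 1)
    (htr : ∀ x y : A, τ (x * y) = τ (y * x)) {a b : A} (ha : IsSelfAdjoint a) (hb : 0 ≤ b)
    (h : CuntzSubequiv a b) {p : ℝ} (hp : p ∈ Set.Ioc 0 1) :
    (τ (a ^ p)).re ≤ (‖a‖ + 1) ^ p * dTau τ b := by
  obtain ⟨v, hv⟩ := h
  refine le_of_forall_pos_le_add fun δ hδ => ?_
  set ε := (min δ 1) ^ p⁻¹
  have hε : 0 < ε := by positivity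
  have hε1 : ε ≤ 1 := Real.rpow_le_one (by positivity) (min_le_right _ _) (inv_nonneg.mpr hp.1.le)
  have hεp : ε ^ p = min δ 1 := Real.rpow_inv_rpow (by positivity) hp.1.ne'
  obtain ⟨N, hN⟩ := Metric.tendsto_atTop.mp hv ε hε
  set y := v N * b * star (v N)
  have hay : ‖a - y‖ ≤ ε := by simpa [dist_eq_norm, norm_sub_rev] using (hN N le_rfl).le
  have hyR : ‖y‖ ≤ ‖a‖ + 1 := by linarith [norm_le_norm_add_norm_sub' y a, norm_sub_rev y a]
  calc (τ (a ^ p)).re ≤ (τ (y ^ p)).re + ε ^ p :=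
        re_map_rpow_le_of_norm_sub_le τ hpos hone ha (star_right_conjugate_nonneg hb _) hay
          ⟨hp.1.le, hp.2⟩
    _ ≤ (‖a‖ + 1) ^ p * dTau τ b + δ := by
        rw [hεp]
        gcongr
        · exact re_map_rpow_conj_le τ hpos hone htr hb (v N) hyR hp.1
        · exact min_le_left _ _

end PositiveTrace

/-- If `a ≾ b` for positive elements of a unital C*-algebra and `τ` is a tracial
state, then `d_τ(a) ≤ d_τ(b)`. -/
theorem stmt_11 {A : Type*} [CStarAlgebra A] [PartialOrder A] [StarOrderedRing A]
    (τ : A →L[ℂ] ℂ)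
    (hpos : ∀ x : A, 0 ≤ x → 0 ≤ τ x) (hone : τ 1 = 1)
    (htr : ∀ x y : A, τ (x * y) = τ (y * x))
    (a b : A) (ha : 0 ≤ a) (hb : 0 ≤ b) (h : CuntzSubequiv a b) :
    dTau τ a ≤ dTau τ b := by
  have hle : ∀ᶠ n : ℕ in atTop,
      (τ (a ^ (n : ℝ)⁻¹)).re ≤ (‖a‖ + 1) ^ (n : ℝ)⁻¹ * dTau τ b := by
    filter_upwards [eventually_gt_atTop 0] with n hn
    exact re_map_rpow_le_of_cuntzSubequiv τ hpos hone htr (.of_nonneg ha) hb h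
      ⟨by positivity, Nat.cast_inv_le_one n⟩
  rw [dTau_eq_limsup_rpow τ ha]
  simpa using limsup_le_mul_limsup_of_le_mul (w := fun _ => dTau τ b)
    (tendsto_rpow_inv_natCast_atTop (by positivity)) (fun _ => by positivity)
    (fun _ => dTau_nonneg τ hpos hone hb) isBoundedUnder_const
    (isCoboundedUnder_le_of_le atTop fun _ => re_map_nonneg τ hpos rpow_nonneg) hle
end

section
/- On a metrizable compact convex set K, every bounded strictly positive lower semicontinuous affine function is the pointwise supremum of an increasing sequence of continuous strictly positive affine functions on K. -/
variable {E : Type*} [AddCommGroup E] [Module ℝ E] [TopologicalSpace E]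
  [IsTopologicalAddGroup E] [ContinuousSMul ℝ E]

/-- `f` is affine on `K`. -/
def IsAffineOn (K : Set E) (f : E → ℝ) : Prop :=
  ∀ x ∈ K, ∀ y ∈ K, ∀ t : ℝ, 0 ≤ t → t ≤ 1 →
    f (t • x + (1 - t) • y) = t * f x + (1 - t) * f y

/-! The continuous affine functions lying strictly below `f` on `K` form an upward directed
family whose pointwise supremum is `f`. Both facts come from Hahn–Banach in `E × ℝ`: a compact
convex set lying strictly below the graph of `f` (a single point, or the convex join of the graphs
of two such minorants) is strictly separated from the closed convex epigraph of `f`, and the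
separating hyperplane cannot be vertical. As `K × ℝ` is second countable, countably many of these
minorants already have supremum `f`; choosing upper bounds recursively, starting from a positive
constant below `min f`, turns them into an increasing sequence. -/

open Set

theorem DirectedOn.exists_seq_of_countable {α : Type*} {r : α → α → Prop} {S T : Set α}
    (hS : DirectedOn r S) {a₀ : α} (ha₀ : a₀ ∈ S) (hTS : T ⊆ S) (hT : T.Countable) :
    ∃ w : ℕ → α, w 0 = a₀ ∧ (∀ n, w n ∈ S) ∧ (∀ n, r (w n) (w (n + 1))) ∧
      ∀ t ∈ T, ∃ n, r t (w n) := by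
  obtain ⟨e, he⟩ := (hT.insert a₀).exists_eq_range (insert_nonempty a₀ T)
  have heS : ∀ n, e n ∈ S := fun n ↦ insert_subset ha₀ hTS (he ▸ mem_range_self n)
  choose! g hgS hg using hS
  let w : ℕ → α := fun n ↦ Nat.rec a₀ (fun n p ↦ g p (e n)) n
  have hwS : ∀ n, w n ∈ S := fun n ↦ by
    induction n with
    | zero => exact ha₀
    | succ n ih => exact hgS _ ih _ (heS n)
  refine ⟨w, rfl, hwS, fun n ↦ (hg _ (hwS n) _ (heS n)).1, fun t ht ↦ ?_⟩
  obtain ⟨n, rfl⟩ : t ∈ range e := he ▸ mem_insert_of_mem a₀ ht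
  exact ⟨n + 1, (hg _ (hwS n) _ (heS n)).2⟩

theorem exists_countable_subfamily_forall_lt_exists {X ι : Type*} [TopologicalSpace X]
    [SecondCountableTopology X] {f : X → ℝ} {g : ι → X → ℝ} (hg : ∀ i, Continuous (g i))
    {S : Set ι} (hS : ∀ x, ∀ r < f x, ∃ i ∈ S, r < g i x) :
    ∃ T ⊆ S, T.Countable ∧ ∀ x, ∀ r < f x, ∃ i ∈ T, r < g i x := by
  obtain ⟨T, hTS, hT, hU⟩ := TopologicalSpace.isOpen_biUnion_countable S
    (fun i ↦ {q : X × ℝ | q.2 < g i q.1})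
    fun i _ ↦ isOpen_lt continuous_snd ((hg i).comp continuous_fst)
  refine ⟨T, hTS, hT, fun x r hr ↦ ?_⟩
  obtain ⟨i, hi, hri⟩ := hS x r hr
  have hxr : (x, r) ∈ ⋃ i ∈ T, {q : X × ℝ | q.2 < g i q.1} := hU ▸ mem_biUnion hi hri
  simpa using hxr

theorem LowerSemicontinuousOn.exists_pos_forall_lt {α : Type*} [TopologicalSpace α]
    {f : α → ℝ} {K : Set α} (hf : LowerSemicontinuousOn f K) (hK : IsCompact K)
    (hpos : ∀ x ∈ K, 0 < f x) : ∃ δ > 0, ∀ x ∈ K, δ < f x := by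
  rcases K.eq_empty_or_nonempty with rfl | hne
  · exact ⟨1, one_pos, by simp⟩
  obtain ⟨x₀, hx₀, hmin⟩ := hf.exists_isMinOn hne hK
  exact ⟨f x₀ / 2, half_pos (hpos x₀ hx₀),
    fun x hx ↦ (half_lt_self (hpos x₀ hx₀)).trans_le (hmin hx)⟩

theorem LowerSemicontinuousOn.notMem_closure_epigraph {α : Type*} [TopologicalSpace α]
    {f : α → ℝ} {K : Set α} (hf : LowerSemicontinuousOn f K) {p : α × ℝ} (hpK : p.1 ∈ K)
    (hp : p.2 < f p.1) : p ∉ closure {q : α × ℝ | q.1 ∈ K ∧ f q.1 ≤ q.2} := by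
  obtain ⟨r, hpr, hrf⟩ := exists_between hp
  obtain ⟨U, hU, hpU, hUK⟩ := mem_nhdsWithin.1 (hf p.1 hpK r hrf)
  refine mem_closure_iff_nhds.not.2 fun h ↦ ?_
  obtain ⟨⟨y, t⟩, ⟨hyU, htr⟩, hyK, hft⟩ :=
    h _ (prod_mem_nhds (hU.mem_nhds hpU) (Iio_mem_nhds hpr))
  exact (hUK ⟨hyU, hyK⟩).not_ge (hft.trans htr.le)

theorem IsCompact.convexJoin {F : Type*} [AddCommGroup F] [Module ℝ F] [TopologicalSpace F]
    [IsTopologicalAddGroup F] [ContinuousSMul ℝ F] {s t : Set F} (hs : IsCompact s)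
    (ht : IsCompact t) : IsCompact (_root_.convexJoin ℝ s t) := by
  have : _root_.convexJoin ℝ s t =
      (fun p : ℝ × F × F ↦ AffineMap.lineMap p.2.1 p.2.2 p.1) '' (Icc 0 1 ×ˢ s ×ˢ t) := by
    ext z
    simp only [mem_convexJoin, segment_eq_image_lineMap, mem_image, mem_prod, Prod.exists]
    aesop
  rw [this]
  refine (isCompact_Icc.prod (hs.prod ht)).image ?_
  simp only [AffineMap.lineMap_apply_module]
  fun_prop

theorem IsAffineOn.convexOn {V : Type*} [AddCommGroup V] [Module ℝ V] {K : Set V} {f : V → ℝ}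
    (hf : IsAffineOn K f) (hK : Convex ℝ K) : ConvexOn ℝ K f := by
  refine ⟨hK, fun x hx y hy a b ha hb hab ↦ ?_⟩
  obtain rfl : b = 1 - a := by linarith
  exact (hf x hx y hy a ha (by linarith)).le

theorem IsAffineOn.concaveOn {V : Type*} [AddCommGroup V] [Module ℝ V] {K : Set V} {f : V → ℝ}
    (hf : IsAffineOn K f) (hK : Convex ℝ K) : ConcaveOn ℝ K f := by
  refine ⟨hK, fun x hx y hy a b ha hb hab ↦ ?_⟩
  obtain rfl : b = 1 - a := by linarith
  exact (hf x hx y hy a ha (by linarith)).ge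

theorem ContinuousAffineMap.isAffineOn {V : Type*} [AddCommGroup V] [Module ℝ V]
    [TopologicalSpace V] (a : V →ᴬ[ℝ] ℝ) (K : Set V) : IsAffineOn K a :=
  fun _ _ _ _ _ _ _ ↦ Convex.combo_affine_apply (f := a.toAffineMap) (add_sub_cancel _ _)

def strictAffineMinorants (K : Set E) (f : E → ℝ) : Set (E →ᴬ[ℝ] ℝ) :=
  {a | ∀ x ∈ K, a x < f x}

section

variable [LocallyConvexSpace ℝ E] {K : Set E} {f : E → ℝ}

theorem ConvexOn.exists_mem_strictAffineMinorants_between (hf : ConvexOn ℝ K f)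
    (hlsc : LowerSemicontinuousOn f K) {C : Set (E × ℝ)} (hC : IsCompact C)
    (hCconv : Convex ℝ C) (hCne : C.Nonempty) (hCK : ∀ p ∈ C, p.1 ∈ K ∧ p.2 < f p.1) :
    ∃ a ∈ strictAffineMinorants K f, ∀ p ∈ C, p.2 < a p.1 := by
  -- `K` need not be closed (`E` is not assumed Hausdorff), hence the closure
  have hdisj : Disjoint C (closure {q : E × ℝ | q.1 ∈ K ∧ f q.1 ≤ q.2}) :=
    disjoint_left.2 fun p hp ↦ hlsc.notMem_closure_epigraph (hCK p hp).1 (hCK p hp).2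
  obtain ⟨Λ, u, v, hCu, huv, hv⟩ := geometric_hahn_banach_compact_closed hCconv hC
    hf.convex_epigraph.closure isClosed_closure hdisj
  have hΛ : ∀ x t, Λ (x, t) = Λ (x, 0) + t * Λ (0, 1) := fun x t ↦ by
    rw [← smul_eq_mul, ← map_smul, ← map_add, Prod.smul_mk, Prod.mk_add_mk]
    simp
  have hvK : ∀ x ∈ K, v < Λ (x, 0) + f x * Λ (0, 1) :=
    fun x hx ↦ hΛ x (f x) ▸ hv _ (subset_closure ⟨hx, le_rfl⟩)
  have hCv : ∀ p ∈ C, Λ (p.1, 0) + p.2 * Λ (0, 1) < v :=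
    fun p hp ↦ (hΛ p.1 p.2 ▸ hCu p hp).trans huv
  -- the separating hyperplane is not vertical, so it is the graph of an affine function
  have hβ : 0 < Λ (0, 1) := by
    obtain ⟨p, hp⟩ := hCne
    nlinarith [hvK p.1 (hCK p hp).1, hCv p hp, (hCK p hp).2]
  let a : E →ᴬ[ℝ] ℝ := (Λ (0, 1))⁻¹ •
    (ContinuousAffineMap.const ℝ E v - (Λ.comp (.inl ℝ E ℝ)).toContinuousAffineMap)
  have ha : ∀ x, a x = (v - Λ (x, 0)) / Λ (0, 1) := fun x ↦ by simp [a, div_eq_inv_mul]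
  refine ⟨a, fun x hx ↦ ?_, fun p hp ↦ ?_⟩
  · rw [ha, div_lt_iff₀ hβ]
    linarith [hvK x hx]
  · rw [ha, lt_div_iff₀ hβ]
    linarith [hCv p hp]

theorem ConvexOn.exists_mem_strictAffineMinorants_lt (hf : ConvexOn ℝ K f)
    (hlsc : LowerSemicontinuousOn f K) {x : E} (hx : x ∈ K) {r : ℝ} (hr : r < f x) :
    ∃ a ∈ strictAffineMinorants K f, r < a x := by
  obtain ⟨a, ha, har⟩ := hf.exists_mem_strictAffineMinorants_between hlsc isCompact_singleton
    (convex_singleton (x, r)) (singleton_nonempty _) (by simpa using ⟨hx, hr⟩)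
  exact ⟨a, ha, har _ rfl⟩

theorem directedOn_strictAffineMinorants (hK : IsCompact K) (hf : ConvexOn ℝ K f)
    (hf' : ConcaveOn ℝ K f) (hlsc : LowerSemicontinuousOn f K) :
    DirectedOn (fun a b : E →ᴬ[ℝ] ℝ ↦ ∀ x ∈ K, a x ≤ b x) (strictAffineMinorants K f) := by
  intro a₁ h₁ a₂ h₂
  rcases K.eq_empty_or_nonempty with rfl | hne
  · exact ⟨a₁, h₁, by simp, by simp⟩
  let graph (a : E →ᴬ[ℝ] ℝ) : Set (E × ℝ) := (ContinuousAffineMap.id ℝ E).prod a '' K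
  have hcompact (a : E →ᴬ[ℝ] ℝ) : IsCompact (graph a) :=
    hK.image (ContinuousMapClass.map_continuous _)
  have hconvex (a : E →ᴬ[ℝ] ℝ) : Convex ℝ (graph a) :=
    hf.1.affine_image ((ContinuousAffineMap.id ℝ E).prod a).toAffineMap
  have hbelow : ∀ p ∈ convexJoin ℝ (graph a₁) (graph a₂), p.1 ∈ K ∧ p.2 < f p.1 := by
    intro p hp
    obtain ⟨_, ⟨x, hx, rfl⟩, _, ⟨y, hy, rfl⟩, s, t, hs, ht, hst, rfl⟩ := mem_convexJoin.1 hp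
    simp only [Prod.fst_add, Prod.snd_add, Prod.smul_fst, Prod.smul_snd,
      ContinuousAffineMap.prod_apply, ContinuousAffineMap.coe_id, id, smul_eq_mul]
    refine ⟨hf.1 hx hy hs ht hst, ?_⟩
    calc s * a₁ x + t * a₂ y < s * f x + t * f y := by
          have e₁ : 0 < f x - a₁ x := sub_pos.2 (h₁ x hx)
          have e₂ : 0 < f y - a₂ y := sub_pos.2 (h₂ y hy)
          nlinarith [mul_pos e₁ e₂, mul_nonneg hs e₁.le, mul_nonneg ht e₂.le]
      _ ≤ f (s • x + t • y) := hf'.2 hx hy hs ht hst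
  obtain ⟨a, ha, haC⟩ := hf.exists_mem_strictAffineMinorants_between hlsc
    ((hcompact a₁).convexJoin (hcompact a₂)) ((hconvex a₁).convexJoin (hconvex a₂))
    ((hne.image _).mono (subset_convexJoin_left (hne.image _))) hbelow
  exact ⟨a, ha, fun x hx ↦ (haC _ (subset_convexJoin_left (hne.image _) ⟨x, hx, rfl⟩)).le,
    fun x hx ↦ (haC _ (subset_convexJoin_right (hne.image _) ⟨x, hx, rfl⟩)).le⟩

end

theorem stmt_16_general [LocallyConvexSpace ℝ E] (K : Set E) (hK : IsCompact K)
    (hconv : Convex ℝ K) [TopologicalSpace.MetrizableSpace K]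
    (f : E → ℝ) (haff : IsAffineOn K f) (hlsc : LowerSemicontinuousOn f K)
    (hpos : ∀ x ∈ K, 0 < f x) :
    ∃ u : ℕ → E → ℝ,
      (∀ n, IsAffineOn K (u n) ∧ ContinuousOn (u n) K ∧ ∀ x ∈ K, 0 < u n x) ∧
      (∀ n, ∀ x ∈ K, u n x ≤ u (n + 1) x) ∧
      (∀ x ∈ K, IsLUB (Set.range fun n => u n x) (f x)) := by
  have : CompactSpace K := isCompact_iff_compactSpace.1 hK
  have hf := haff.convexOn hconv
  obtain ⟨δ, hδ, hδf⟩ := hlsc.exists_pos_forall_lt hK hpos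
  obtain ⟨T, hTS, hT, hTf⟩ := exists_countable_subfamily_forall_lt_exists
    (g := fun (a : E →ᴬ[ℝ] ℝ) (x : K) ↦ a x) (fun a ↦ by fun_prop)
    fun x r hr ↦ hf.exists_mem_strictAffineMinorants_lt hlsc x.2 hr
  obtain ⟨w, hw0, hwS, hwmono, hwT⟩ :=
    (directedOn_strictAffineMinorants hK hf (haff.concaveOn hconv) hlsc).exists_seq_of_countable
      (a₀ := ContinuousAffineMap.const ℝ E δ) hδf hTS hT
  have hδw : ∀ n, ∀ x ∈ K, δ ≤ w n x := by
    intro n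
    induction n with
    | zero => simp [hw0]
    | succ n ih => exact fun x hx ↦ (ih x hx).trans (hwmono n x hx)
  refine ⟨fun n ↦ w n, fun n ↦ ⟨(w n).isAffineOn K, (w n).continuous.continuousOn,
    fun x hx ↦ hδ.trans_le (hδw n x hx)⟩, hwmono, fun x hx ↦ ⟨?_, fun b hb ↦ ?_⟩⟩
  · rintro _ ⟨n, rfl⟩
    exact (hwS n x hx).le
  · refine le_of_forall_lt fun r hr ↦ ?_
    obtain ⟨a, haT, hra⟩ := hTf ⟨x, hx⟩ r hr
    obtain ⟨n, hn⟩ := hwT a haT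
    exact hra.trans_le ((hn x hx).trans (hb ⟨n, rfl⟩))

/-- On a metrizable compact convex set `K`, every bounded strictly positive
lower semicontinuous affine function is the pointwise supremum of an increasing
sequence of continuous strictly positive affine functions. -/
theorem stmt_16 [LocallyConvexSpace ℝ E] (K : Set E) (hK : IsCompact K)
    (hconv : Convex ℝ K) [TopologicalSpace.MetrizableSpace K]
    (f : E → ℝ) (haff : IsAffineOn K f) (hlsc : LowerSemicontinuousOn f K)
    (hpos : ∀ x ∈ K, 0 < f x) (hbdd : BddAbove (f '' K)) :
    ∃ u : ℕ → E → ℝ,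
      (∀ n, IsAffineOn K (u n) ∧ ContinuousOn (u n) K ∧ ∀ x ∈ K, 0 < u n x) ∧
      (∀ n, ∀ x ∈ K, u n x ≤ u (n + 1) x) ∧
      (∀ x ∈ K, IsLUB (Set.range fun n => u n x) (f x)) :=
  stmt_16_general K hK hconv f haff hlsc hpos
end
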